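/- For the regular tree T of degree 4 (the Cayley graph of the free group on 2 generators), the tree entropy h(T) = log d - ∑_{k≥1} p_k(o;T)/k equals 3 log(3/2). -/

import Mathlib

/-!
Read a walk as a word in the generators: it returns to the root iff the word reduces to `1`, and
from a vertex at distance `m ≥ 1` exactly one of the four letters decreases the distance, the other
three increase it. So the return counts from distance `m` obey a linear recursion, and their
generating functions `u m` satisfy `u (m + 1) = z/4 · u m + 3z/4 · u (m + 2)`. The characteristic
roots are `(2 ± r)/(3z)` with `r = √(4 - 3z²)`; as `u m` is bounded in `m`, the component along the
root larger than `1` vanishes, which gives `u 1 = 3z / ((1 + r)(2 + r))` and `𝒢 = u 0 = 3/(1 + r)`.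
Finally `p_{k+1}(o) / (k + 1) = ∫₀¹ p_{k+1}(o) zᵏ dz`, so the series in `h(T)` is
`∫₀¹ u 1 = [log (1 + r) - 2 log (2 + r)]₀¹ = 5 log 2 - 3 log 3`.
-/

/-- The generating set of the free group on two letters: the two generators and their
inverses. The corresponding Cayley graph is the 4-regular tree. -/
def genSet : Set (FreeGroup (Fin 2)) :=
  {g | ∃ i : Fin 2, g = FreeGroup.of i ∨ g = (FreeGroup.of i)⁻¹}

/-- The `k`-step return probability of simple random walk on the 4-regular tree
(the Cayley graph of the free group on two generators), i.e. the number of words of length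
`k` in the generators whose product is the identity, divided by `4^k`. -/
noncomputable def retProb (k : ℕ) : ℝ :=
  (Nat.card {w : Fin k → genSet //
      (List.ofFn fun i => ((w i : FreeGroup (Fin 2)))).prod = 1} : ℝ) / 4 ^ k

open Real Set MeasureTheory

noncomputable def returnCount {ι G : Type*} [Monoid G] (s : ι → G) (g : G) (k : ℕ) : ℕ :=
  Nat.card {w : Fin k → ι // g * (List.ofFn fun i => s (w i)).prod = 1}

section returnCount

variable {ι G : Type*} [Monoid G] (s : ι → G)

theorem returnCount_one_zero : returnCount s 1 0 = 1 := by
  simp [returnCount]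

theorem returnCount_zero_of_ne_one {g : G} (hg : g ≠ 1) : returnCount s g 0 = 0 := by
  simp [returnCount, hg]

theorem returnCount_succ [Fintype ι] (g : G) (k : ℕ) :
    returnCount s g (k + 1) = ∑ i, returnCount s (g * s i) k := by
  simp only [returnCount]
  rw [← Nat.card_sigma]
  refine Nat.card_congr ((Equiv.subtypeEquiv (Fin.consEquiv fun _ => ι).symm fun w => ?_).trans
    (Equiv.subtypeProdEquivSigmaSubtype fun i (w : Fin k → ι) =>
      g * s i * (List.ofFn fun j => s (w j)).prod = 1))
  simp [List.ofFn_succ, mul_assoc, Fin.consEquiv, Fin.tail]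

end returnCount

namespace FreeGroup

variable {α : Type*} [DecidableEq α]

theorem toWord_mul_mk_singleton_of_toWord_eq {g : FreeGroup α} {L : List (α × Bool)}
    {x : α × Bool} (hg : g.toWord = L ++ [(x.1, !x.2)]) : (g * mk [x]).toWord = L := by
  have hL : IsReduced L := isReduced_toWord.infix (hg ▸ (List.prefix_append L _).isInfix)
  have hmul : g * mk [x] = mk L := by
    rw [← mk_toWord (x := g), hg, mul_mk, List.append_assoc]
    have : (mk (L ++ [(x.1, !x.2), (x.1, x.2)]) : FreeGroup α) = mk (L ++ []) :=
      Quot.sound Red.Step.not_rev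
    simpa using this
  rw [hmul, toWord_mk, hL.reduce_eq]

theorem toWord_mul_mk_singleton_of_getLast?_ne {g : FreeGroup α} {x : α × Bool}
    (hg : g.toWord.getLast? ≠ some (x.1, !x.2)) : (g * mk [x]).toWord = g.toWord ++ [x] := by
  rw [toWord_mul, toWord_mk, reduce_singleton]
  refine IsReduced.reduce_eq
    (List.isChain_append.2 ⟨isReduced_toWord, List.isChain_singleton x, ?_⟩)
  intro y hy z hz h1
  obtain rfl : x = z := by simpa using hz
  by_contra h2
  exact hg (by rw [Option.mem_def.1 hy, (Prod.ext h1 (Bool.eq_not.2 h2) : y = (x.1, !x.2))])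

theorem sum_comp_norm_mul_mk_singleton [Fintype α] {M : Type*} [AddCommMonoid M] (f : ℕ → M)
    (g : FreeGroup α) :
    ∑ x : α × Bool, f (norm (g * mk [x])) = if g = 1 then (2 * Fintype.card α) • f 1
      else f (norm g - 1) + (2 * Fintype.card α - 1) • f (norm g + 1) := by
  split_ifs with hg
  · subst hg
    simp [norm, mul_comm]
  obtain ⟨L, y, hy⟩ := (List.eq_nil_or_concat' g.toWord).resolve_left (by simpa)
  set q : α × Bool := (y.1, !y.2)
  have hq : norm (g * mk [q]) = norm g - 1 := by
    rw [norm, norm, toWord_mul_mk_singleton_of_toWord_eq (x := q) (by simpa [q] using hy), hy]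
    simp
  have hne (x : α × Bool) (hx : x ≠ q) : norm (g * mk [x]) = norm g + 1 := by
    rw [norm, norm, toWord_mul_mk_singleton_of_getLast?_ne, List.length_append]
    · rfl
    · rw [hy, List.getLast?_concat]
      intro h
      obtain ⟨h1, h2⟩ := Prod.ext_iff.1 (Option.some_injective _ h)
      exact hx (Prod.ext h1.symm (by simp [q, h2]))
  rw [← Finset.add_sum_erase _ _ (Finset.mem_univ q), hq,
    Finset.sum_congr rfl fun x hx => by rw [hne x (Finset.ne_of_mem_erase hx)],
    Finset.sum_const, Finset.card_erase_of_mem (Finset.mem_univ q)]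
  simp [Fintype.card_prod, mul_comm]

end FreeGroup

theorem eq_zero_of_succ_eq_mul_of_abs_le {v : ℕ → ℝ} {β C : ℝ} (hβ : 1 < |β|)
    (hv : ∀ m, v (m + 1) = β * v m) (hC : ∀ m, |v m| ≤ C) : v 0 = 0 := by
  have hpow (m : ℕ) : |v m| = |β| ^ m * |v 0| := by
    induction m with
    | zero => simp
    | succ m ih => rw [hv, abs_mul, ih, pow_succ]; ring
  by_contra h0
  obtain ⟨m, hm⟩ := pow_unbounded_of_one_lt (C / |v 0|) hβ
  rw [div_lt_iff₀ (abs_pos.2 h0), ← hpow] at hm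
  exact hm.not_ge (hC m)

theorem tsum_div_succ_eq_integral_of_hasSum {a : ℕ → ℝ} {f : ℝ → ℝ}
    (ha : ∀ n, 0 ≤ a n)
    (hf : ∀ z ∈ Ioo (0 : ℝ) 1, HasSum (fun n => a n * z ^ n) (f z))
    (hfi : IntervalIntegrable f volume 0 1) :
    ∑' n : ℕ, a n / (n + 1) = ∫ z in (0 : ℝ)..1, f z := by
  -- Monotone convergence in `ℝ≥0∞`: the summability of `a n / (n + 1)` comes out at the end.
  have hf_nonneg : ∀ z ∈ Ioo (0 : ℝ) 1, 0 ≤ f z := fun z hz =>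
    (hf z hz).nonneg fun n => mul_nonneg (ha n) (pow_nonneg hz.1.le n)
  have hfi' : IntegrableOn f (Ioo 0 1) := (hfi.1).mono_set Ioo_subset_Ioc_self
  have hterm (n : ℕ) :
      ∫⁻ z in Ioo (0 : ℝ) 1, ENNReal.ofReal (a n * z ^ n) =
        ENNReal.ofReal (a n / (n + 1)) := by
    rw [← ofReal_integral_eq_lintegral_ofReal, ← integral_Ioc_eq_integral_Ioo,
      ← intervalIntegral.integral_of_le zero_le_one, intervalIntegral.integral_const_mul,
      integral_pow]
    · simp [div_eq_mul_inv]
    · exact (continuous_const.mul (continuous_pow n)).integrableOn_Icc.mono_set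
        Ioo_subset_Icc_self
    · exact (ae_restrict_iff' measurableSet_Ioo).2 (.of_forall fun z hz =>
        mul_nonneg (ha n) (pow_nonneg hz.1.le n))
  have hlin : ∑' n : ℕ, ENNReal.ofReal (a n / (n + 1)) =
      ENNReal.ofReal (∫ z in (0 : ℝ)..1, f z) := by
    simp_rw [← hterm]
    rw [← lintegral_tsum fun n => by fun_prop, intervalIntegral.integral_of_le zero_le_one,
      integral_Ioc_eq_integral_Ioo, ofReal_integral_eq_lintegral_ofReal hfi'
        ((ae_restrict_iff' measurableSet_Ioo).2 (.of_forall hf_nonneg))]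
    refine setLIntegral_congr_fun measurableSet_Ioo fun z hz => ?_
    rw [← ENNReal.ofReal_tsum_of_nonneg (fun n => mul_nonneg (ha n) (pow_nonneg hz.1.le n))
      (hf z hz).summable, (hf z hz).tsum_eq]
  have hint_nonneg : 0 ≤ ∫ z in (0 : ℝ)..1, f z := by
    rw [intervalIntegral.integral_of_le zero_le_one, integral_Ioc_eq_integral_Ioo]
    exact setIntegral_nonneg measurableSet_Ioo hf_nonneg
  calc ∑' n : ℕ, a n / (n + 1)
      = ∑' n : ℕ, (ENNReal.ofReal (a n / (n + 1))).toReal := by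
        simp_rw [ENNReal.toReal_ofReal (div_nonneg (ha _) (Nat.cast_add_one_pos _).le)]
    _ = ∫ z in (0 : ℝ)..1, f z := by
        rw [← ENNReal.tsum_toReal_eq fun _ => ENNReal.ofReal_ne_top, hlin,
          ENNReal.toReal_ofReal hint_nonneg]

namespace FourRegularTree

open FreeGroup

/-- Walks of length `k` to the root of the 4-regular tree from a vertex at distance `m` from it. -/
def walkCount : ℕ → ℕ → ℕ
  | 0, 0 => 1
  | _ + 1, 0 => 0
  | 0, k + 1 => 4 * walkCount 1 k
  | m + 1, k + 1 => walkCount m k + 3 * walkCount (m + 2) k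

theorem walkCount_le (m k : ℕ) : walkCount m k ≤ 4 ^ k := by
  induction k generalizing m with
  | zero => cases m <;> simp [walkCount]
  | succ k ih =>
    cases m with
    | zero => simp only [walkCount, pow_succ]; linarith [ih 1]
    | succ m => simp only [walkCount, pow_succ]; linarith [ih m, ih (m + 2)]

theorem returnCount_mk_eq_walkCount (g : FreeGroup (Fin 2)) (k : ℕ) :
    returnCount (fun x => mk [x]) g k = walkCount (norm g) k := by
  induction k generalizing g with
  | zero =>
    obtain rfl | hg := eq_or_ne g 1
    · simp [returnCount_one_zero, walkCount]
    · obtain ⟨m, hm⟩ := Nat.exists_eq_succ_of_ne_zero (norm_eq_zero.not.2 hg)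
      rw [returnCount_zero_of_ne_one _ hg, hm, walkCount]
  | succ k ih =>
    simp only [returnCount_succ, ih, sum_comp_norm_mul_mk_singleton (walkCount · k)]
    split_ifs with hg
    · simp [hg, walkCount]
    · obtain ⟨m, hm⟩ := Nat.exists_eq_succ_of_ne_zero (norm_eq_zero.not.2 hg)
      simp [hm, walkCount]

theorem mk_singleton_mem_genSet (x : Fin 2 × Bool) : mk [x] ∈ genSet := by
  obtain ⟨i, _ | _⟩ := x
  exacts [⟨i, .inr rfl⟩, ⟨i, .inl rfl⟩]

noncomputable def letterEquiv : Fin 2 × Bool ≃ genSet :=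
  Equiv.ofBijective (fun x => ⟨mk [x], mk_singleton_mem_genSet x⟩) <| by
    refine ⟨fun x y h => ?_, ?_⟩
    · simpa using congrArg toWord (Subtype.ext_iff.1 h)
    · rintro ⟨g, i, rfl | rfl⟩
      exacts [⟨(i, true), rfl⟩, ⟨(i, false), rfl⟩]

theorem coe_letterEquiv (x : Fin 2 × Bool) : (letterEquiv x : FreeGroup (Fin 2)) = mk [x] := rfl

noncomputable def walkProb (m k : ℕ) : ℝ := walkCount m k / 4 ^ k

theorem retProb_eq_walkProb (k : ℕ) : retProb k = walkProb 0 k := by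
  rw [retProb, walkProb, ← norm_one (α := Fin 2), ← returnCount_mk_eq_walkCount]
  congr 2
  exact (Nat.card_congr (Equiv.subtypeEquiv (Equiv.piCongrRight fun _ => letterEquiv)
    fun w => by simp [coe_letterEquiv])).symm

theorem walkProb_nonneg (m k : ℕ) : 0 ≤ walkProb m k := by
  unfold walkProb; positivity

theorem walkProb_le_one (m k : ℕ) : walkProb m k ≤ 1 := by
  rw [walkProb, div_le_one (by positivity)]
  exact_mod_cast walkCount_le m k

noncomputable def walkGF (m : ℕ) (z : ℝ) : ℝ := ∑' k, walkProb m k * z ^ k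

theorem walkProb_mul_pow_le (m k : ℕ) {z : ℝ} (hz : 0 ≤ z) : walkProb m k * z ^ k ≤ z ^ k :=
  mul_le_of_le_one_left (pow_nonneg hz k) (walkProb_le_one m k)

theorem summable_walkProb_mul_pow (m : ℕ) {z : ℝ} (hz0 : 0 ≤ z) (hz1 : z < 1) :
    Summable fun k => walkProb m k * z ^ k :=
  .of_nonneg_of_le (fun k => mul_nonneg (walkProb_nonneg m k) (pow_nonneg hz0 k))
    (fun k => walkProb_mul_pow_le m k hz0) (summable_geometric_of_lt_one hz0 hz1)

theorem walkGF_nonneg (m : ℕ) {z : ℝ} (hz : 0 ≤ z) : 0 ≤ walkGF m z :=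
  tsum_nonneg fun k => mul_nonneg (walkProb_nonneg m k) (pow_nonneg hz k)

theorem walkGF_le (m : ℕ) {z : ℝ} (hz0 : 0 ≤ z) (hz1 : z < 1) :
    walkGF m z ≤ (1 - z)⁻¹ := by
  rw [← tsum_geometric_of_lt_one hz0 hz1]
  exact (summable_walkProb_mul_pow m hz0 hz1).tsum_le_tsum (fun k => walkProb_mul_pow_le m k hz0)
    (summable_geometric_of_lt_one hz0 hz1)

theorem walkProb_zero_succ (k : ℕ) : walkProb 0 (k + 1) = walkProb 1 k := by
  simp only [walkProb, walkCount, pow_succ]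
  push_cast
  field_simp

theorem walkGF_zero {z : ℝ} (hz0 : 0 ≤ z) (hz1 : z < 1) : walkGF 0 z = 1 + z * walkGF 1 z := by
  rw [walkGF, (summable_walkProb_mul_pow 0 hz0 hz1).tsum_eq_zero_add, walkGF, ← tsum_mul_left]
  congr 1
  · simp [walkProb, walkCount]
  · congr 1 with k
    rw [walkProb_zero_succ]
    ring

theorem walkGF_succ (m : ℕ) {z : ℝ} (hz0 : 0 ≤ z) (hz1 : z < 1) :
    walkGF (m + 1) z = z / 4 * walkGF m z + 3 * z / 4 * walkGF (m + 2) z := by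
  rw [walkGF, (summable_walkProb_mul_pow (m + 1) hz0 hz1).tsum_eq_zero_add, walkGF, walkGF,
    ← tsum_mul_left, ← tsum_mul_left,
    ← ((summable_walkProb_mul_pow m hz0 hz1).mul_left _).tsum_add
      ((summable_walkProb_mul_pow (m + 2) hz0 hz1).mul_left _)]
  simp only [walkProb, walkCount, CharP.cast_eq_zero, zero_div, zero_mul, zero_add]
  congr 1 with k
  push_cast
  ring

theorem walkGF_one_eq {z : ℝ} (hz0 : 0 < z) (hz1 : z < 1) :
    walkGF 1 z = 3 * z / ((1 + √(4 - 3 * z ^ 2)) * (2 + √(4 - 3 * z ^ 2))) := by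
  set r := √(4 - 3 * z ^ 2)
  have hr : r ^ 2 = 4 - 3 * z ^ 2 := Real.sq_sqrt (by nlinarith)
  have hr1 : 1 < r := by nlinarith [Real.sqrt_nonneg (4 - 3 * z ^ 2)]
  have hr2 : r < 2 := by nlinarith [Real.sqrt_nonneg (4 - 3 * z ^ 2)]
  -- `α` and `β` are the roots of `3z x² - 4x + z`, the characteristic polynomial of `walkGF_succ`.
  set α := (2 - r) / (3 * z)
  set β := (2 + r) / (3 * z)
  have hα : 0 ≤ α := div_nonneg (by linarith) (by linarith)
  have hβ : 1 < |β| := by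
    rw [abs_of_pos (by positivity), one_lt_div (by positivity)]
    linarith
  have hu1 : walkGF 1 z - α * walkGF 0 z = 0 := by
    refine eq_zero_of_succ_eq_mul_of_abs_le (v := fun m => walkGF (m + 1) z - α * walkGF m z)
      hβ (fun m => ?_) (C := (1 + α) * (1 - z)⁻¹) (fun m => ?_)
    · have h := walkGF_succ m hz0.le hz1
      simp only [α, β]
      rw [show m + 1 + 1 = m + 2 from rfl]
      field_simp
      linear_combination (-12 * z) * h - walkGF m z * hr
    · have := walkGF_le m hz0.le hz1
      have := walkGF_le (m + 1) hz0.le hz1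
      have := walkGF_nonneg m hz0.le
      have := walkGF_nonneg (m + 1) hz0.le
      rw [abs_le]
      constructor <;> nlinarith
  have h0 := walkGF_zero hz0.le hz1
  simp only [α] at hu1
  field_simp at hu1
  rw [eq_div_iff (by positivity)]
  refine mul_left_cancel₀ hz0.ne' ?_
  linear_combination (2 + r) * hu1 + (4 - r ^ 2) * h0 - hr

theorem hasDerivAt_log_one_add_sub_two_mul_log_two_add {z : ℝ} (hz : 3 * z ^ 2 < 4) :
    HasDerivAt (fun z => log (1 + √(4 - 3 * z ^ 2)) - 2 * log (2 + √(4 - 3 * z ^ 2)))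
      (3 * z / ((1 + √(4 - 3 * z ^ 2)) * (2 + √(4 - 3 * z ^ 2)))) z := by
  have hr := (((hasDerivAt_pow 2 z).const_mul 3).const_sub 4).sqrt (by linarith)
  have hr0 : 0 < √(4 - 3 * z ^ 2) := Real.sqrt_pos.2 (by linarith)
  refine (((hr.const_add 1).log (by positivity)).sub
    (((hr.const_add 2).log (by positivity)).const_mul 2)).congr_deriv ?_
  field_simp
  ring

theorem continuous_div_one_add_sqrt_mul_two_add_sqrt :
    Continuous fun z : ℝ => 3 * z / ((1 + √(4 - 3 * z ^ 2)) * (2 + √(4 - 3 * z ^ 2))) :=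
  by fun_prop (disch := intro z; positivity)

end FourRegularTree

open FourRegularTree in
/-- Proposition: for the regular tree `T` of degree 4 (the Cayley graph of the free group on
2 generators), the tree entropy `h(T) = log 4 - ∑_{k≥1} p_k(o;T)/k` equals `3 log(3/2)`. -/
theorem stmt10 :
    Real.log 4 - ∑' k : ℕ, retProb (k + 1) / (k + 1) = 3 * Real.log (3 / 2) := by
  have hsum : ∑' k : ℕ, retProb (k + 1) / (k + 1) =
      ∫ z in (0 : ℝ)..1, 3 * z / ((1 + √(4 - 3 * z ^ 2)) * (2 + √(4 - 3 * z ^ 2))) := by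
    simp_rw [retProb_eq_walkProb, walkProb_zero_succ]
    refine tsum_div_succ_eq_integral_of_hasSum (walkProb_nonneg 1) (fun z hz => ?_)
      (continuous_div_one_add_sqrt_mul_two_add_sqrt.intervalIntegrable 0 1)
    rw [← walkGF_one_eq hz.1 hz.2]
    exact (summable_walkProb_mul_pow 1 hz.1.le hz.2).hasSum
  rw [hsum, intervalIntegral.integral_eq_sub_of_hasDerivAt
    (fun z hz => hasDerivAt_log_one_add_sub_two_mul_log_two_add ?_)
    (continuous_div_one_add_sqrt_mul_two_add_sqrt.intervalIntegrable 0 1)]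
  · have hsqrt4 : √(4 : ℝ) = 2 := by
      rw [show (4 : ℝ) = 2 ^ 2 by norm_num, sqrt_sq zero_le_two]
    have hlog4 : log 4 = 2 * log 2 := by
      rw [show (4 : ℝ) = 2 ^ 2 by norm_num, log_pow, Nat.cast_ofNat]
    norm_num [hsqrt4, hlog4, log_div]
    ring
  · rw [uIcc_of_le zero_le_one] at hz
    nlinarith [hz.1, hz.2]
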